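/- arXiv:1903.10449 — 2 statements merged into one kernel-verified Lean document; each statement's English description precedes it below -/
import Mathlib

section
/- Let p > 0, r > 1, n a positive integer, and t > t₀ ≥ 0. Then |exp(-p n² π² t) - exp(-p n² π² t₀)| ≤ (p n² π²)^{1/r} · ((r-1)/r)^{(r-1)/r} · exp(-p n² π² t₀) · (t - t₀)^{1/r}. -/
open Real

/-- Key scalar inequality: `1 - exp (-x) ≤ s^s * x^(1-s)` for `0 < s < 1`, `0 < x`. -/
lemma one_sub_exp_neg_le_aux (s x : ℝ) (hs0 : 0 < s) (hs1 : s < 1) (hx : 0 < x) :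
    1 - Real.exp (-x) ≤ s ^ s * x ^ (1 - s) := by
  have hsne : s ≠ 0 := hs0.ne'
  set c1 : ℝ := (1 - s) * (s / x) ^ s with hc1
  set c3 : ℝ := s ^ (2:ℕ) * (x / s) ^ (1 - s) with hc3
  have hsx : (0:ℝ) < s / x := div_pos hs0 hx
  have hxs : (0:ℝ) < x / s := div_pos hx hs0
  have hc3pos : 0 < c3 := mul_pos (pow_pos hs0 2) (Real.rpow_pos_of_pos hxs _)
  -- the auxiliary function
  set f : ℝ → ℝ := fun u => c1 * u - c3 * Real.exp (-(u / s)) + Real.exp (-u) with hfdef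
  set g : ℝ → ℝ := fun u =>
    c1 + s * ((x / s) ^ (1 - s) * Real.exp (-(u / s))) - Real.exp (-u) with hgdef
  -- pointwise weighted AM-GM
  have hkey : ∀ u : ℝ,
      Real.exp (-u) ≤ c1 + s * ((x / s) ^ (1 - s) * Real.exp (-(u / s))) := by
    intro u
    have hAM : ((s / x) ^ s) ^ (1 - s) * ((x / s) ^ (1 - s) * Real.exp (-(u / s))) ^ s
        ≤ (1 - s) * ((s / x) ^ s) + s * ((x / s) ^ (1 - s) * Real.exp (-(u / s))) :=
      Real.geom_mean_le_arith_mean2_weighted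
        (by linarith : (0:ℝ) ≤ 1 - s) hs0.le
        (Real.rpow_nonneg hsx.le s)
        (mul_nonneg (Real.rpow_nonneg hxs.le _) (Real.exp_pos _).le)
        (by ring)
    have hgm : ((s / x) ^ s) ^ (1 - s) * ((x / s) ^ (1 - s) * Real.exp (-(u / s))) ^ s
        = Real.exp (-u) := by
      rw [← Real.rpow_mul hsx.le,
        Real.mul_rpow (Real.rpow_nonneg hxs.le _) (Real.exp_pos _).le,
        ← Real.rpow_mul hxs.le, ← Real.exp_mul]
      have e1 : -(u / s) * s = -u := by field_simp
      have e2 : (s / x) * (x / s) = 1 := by field_simp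
      rw [e1, ← mul_assoc, mul_comm ((1:ℝ) - s) s, ← Real.mul_rpow hsx.le hxs.le, e2,
        Real.one_rpow, one_mul]
    have h := hAM
    rw [hgm] at h
    calc Real.exp (-u)
        ≤ (1 - s) * ((s / x) ^ s) + s * ((x / s) ^ (1 - s) * Real.exp (-(u / s))) := h
      _ = c1 + s * ((x / s) ^ (1 - s) * Real.exp (-(u / s))) := by rw [hc1]
  -- f is monotone
  have hderiv : ∀ u : ℝ, HasDerivAt f (g u) u := by
    intro u
    have h1 : HasDerivAt (fun u : ℝ => c1 * u) c1 u := by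
      simpa using (hasDerivAt_id u).const_mul c1
    have h2 : HasDerivAt (fun u : ℝ => -(u / s)) (-(1 / s)) u := by
      simpa using ((hasDerivAt_id u).div_const s).fun_neg
    have h2' : HasDerivAt (fun u : ℝ => Real.exp (-(u / s)))
        (Real.exp (-(u / s)) * (-(1 / s))) u := h2.exp
    have h3 : HasDerivAt (fun u : ℝ => Real.exp (-u)) (Real.exp (-u) * (-1)) u := by
      simpa using ((hasDerivAt_id u).neg).exp
    have hd := (h1.sub (h2'.const_mul c3)).add h3
    have heq : c1 - c3 * (Real.exp (-(u / s)) * (-(1 / s))) + Real.exp (-u) * (-1) = g u := by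
      rw [hgdef, hc3]
      field_simp
      ring
    exact heq ▸ hd
  have hg : (0 : ℝ → ℝ) ≤ g := by
    intro u
    simp only [hgdef, Pi.zero_apply]
    linarith [hkey u]
  have hmono : Monotone f := monotone_of_hasDerivAt_nonneg hderiv hg
  have hfx := hmono hx.le
  have hf0 : f 0 = 1 - c3 := by simp [hfdef]; ring
  -- so 1 - exp(-x) ≤ c1 * x + c3
  have hstep : 1 - Real.exp (-x) ≤ c1 * x + c3 := by
    have hfx' : 1 - c3 ≤ c1 * x - c3 * Real.exp (-(x / s)) + Real.exp (-x) := by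
      rw [← hf0]; exact hfx
    have he1 : 0 < Real.exp (-(x / s)) := Real.exp_pos _
    have he2 : Real.exp (-(x / s)) ≤ 1 := Real.exp_le_one_iff.mpr (neg_nonpos.mpr hxs.le)
    nlinarith [hc3pos]
  -- final algebra: c1 * x + c3 = s^s * x^(1-s)
  have hxs_ne : (x:ℝ) ^ s ≠ 0 := (Real.rpow_pos_of_pos hx s).ne'
  have hss_ne : (s:ℝ) ^ (1 - s) ≠ 0 := (Real.rpow_pos_of_pos hs0 _).ne'
  have hB : x ^ (1 - s) * x ^ s = x := by
    rw [← Real.rpow_add hx]; norm_num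
  have hC : s ^ s * s ^ (1 - s) = s := by
    rw [← Real.rpow_add hs0]; norm_num
  have hx1s : x ^ (1 - s) = x / x ^ s := by
    rw [Real.rpow_sub hx, Real.rpow_one]
  have hs1s : s ^ (1 - s) = s / s ^ s := by
    rw [Real.rpow_sub hs0, Real.rpow_one]
  have hss_ne' : (s:ℝ) ^ s ≠ 0 := (Real.rpow_pos_of_pos hs0 s).ne'
  have ec1 : c1 * x = (1 - s) * (s ^ s * x ^ (1 - s)) := by
    rw [hc1, Real.div_rpow hs0.le hx.le, hx1s]
    field_simp
  have ec3 : c3 = s * (s ^ s * x ^ (1 - s)) := by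
    rw [hc3, Real.div_rpow hx.le hs0.le, hs1s]
    field_simp
  calc 1 - Real.exp (-x) ≤ c1 * x + c3 := hstep
    _ = s ^ s * x ^ (1 - s) := by rw [ec1, ec3]; ring

/-- Hölder-type estimate for differences of exponentials. -/
theorem exp_diff_holder
    (p r : ℝ) (hp : 0 < p) (hr : 1 < r)
    (n : ℕ) (hn : 0 < n)
    (t t₀ : ℝ) (ht₀ : 0 ≤ t₀) (ht : t₀ < t) :
    |Real.exp (-(p * (n : ℝ) ^ 2 * π ^ 2 * t))
        - Real.exp (-(p * (n : ℝ) ^ 2 * π ^ 2 * t₀))|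
      ≤ (p * (n : ℝ) ^ 2 * π ^ 2) ^ ((1:ℝ) / r) * ((r - 1) / r) ^ ((r - 1) / r)
          * Real.exp (-(p * (n : ℝ) ^ 2 * π ^ 2 * t₀)) * (t - t₀) ^ ((1:ℝ) / r) := by
  have hnpos : (0:ℝ) < (n:ℝ) := by exact_mod_cast hn
  set a : ℝ := p * (n : ℝ) ^ 2 * π ^ 2 with ha_def
  have ha : 0 < a := by
    have := Real.pi_pos
    positivity
  have hr0 : (0:ℝ) < r := by linarith
  set s : ℝ := (r - 1) / r with hs_def
  have hs0 : 0 < s := div_pos (by linarith) hr0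
  have hs1 : s < 1 := by
    rw [hs_def, div_lt_one hr0]; linarith
  have h1s : 1 - s = 1 / r := by
    rw [hs_def]; field_simp; ring
  have hxpos : 0 < a * (t - t₀) := mul_pos ha (by linarith)
  have key := one_sub_exp_neg_le_aux s (a * (t - t₀)) hs0 hs1 hxpos
  have hle : Real.exp (-(a * t)) ≤ Real.exp (-(a * t₀)) := by
    apply Real.exp_le_exp.mpr
    nlinarith
  have habs : |Real.exp (-(a * t)) - Real.exp (-(a * t₀))|
      = Real.exp (-(a * t₀)) - Real.exp (-(a * t)) := by
    rw [abs_sub_comm, abs_of_nonneg (by linarith)]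
  rw [habs]
  have hsplit : Real.exp (-(a * t)) = Real.exp (-(a * t₀)) * Real.exp (-(a * (t - t₀))) := by
    rw [← Real.exp_add]; ring_nf
  have hmulr : (a * (t - t₀)) ^ ((1:ℝ) / r) = a ^ ((1:ℝ) / r) * (t - t₀) ^ ((1:ℝ) / r) :=
    Real.mul_rpow ha.le (by linarith)
  calc Real.exp (-(a * t₀)) - Real.exp (-(a * t))
      = Real.exp (-(a * t₀)) * (1 - Real.exp (-(a * (t - t₀)))) := by rw [hsplit]; ring
    _ ≤ Real.exp (-(a * t₀)) * (s ^ s * (a * (t - t₀)) ^ (1 - s)) :=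
        mul_le_mul_of_nonneg_left key (Real.exp_pos _).le
    _ = a ^ ((1:ℝ) / r) * s ^ s * Real.exp (-(a * t₀)) * (t - t₀) ^ ((1:ℝ) / r) := by
        rw [h1s, hmulr]; ring
end

section
/- Let p > 0, T > 0, r ∈ (2,4), a ∈ (r/2, 2), and n a positive integer. Then for all t ∈ [0,T]: ∫₀ᵗ (t-τ)^{1/r} exp(-p n² π² (t-τ)) dτ ≤ (n^{-a/r} / (p n² π²)) · (1 + T^{1/r} (1/(p π² e (2-a)))^{1/(2-a)}). -/
open Real MeasureTheory intervalIntegral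

lemma integral_exp_neg_mul (c A B : ℝ) (hc : c ≠ 0) :
    ∫ s in A..B, Real.exp (-(c * s)) = (Real.exp (-(c*A)) - Real.exp (-(c*B))) / c := by
  have h : ∀ s ∈ Set.uIcc A B, HasDerivAt (fun s => -Real.exp (-(c*s)) / c) (Real.exp (-(c*s))) s := by
    intro s _
    have h1 : HasDerivAt (fun s : ℝ => -(c*s)) (-c) s := by
      simpa using ((hasDerivAt_id s).const_mul c).fun_neg
    have h2 := (Real.hasDerivAt_exp (-(c*s))).comp s h1
    have h3 := (h2.fun_neg).div_const c
    rw [mul_neg, neg_neg, mul_div_assoc, div_self hc, mul_one] at h3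
    exact h3
  have hcont : IntervalIntegrable (fun s => Real.exp (-(c*s))) volume A B :=
    (Real.continuous_exp.comp (continuous_const.mul continuous_id).neg).intervalIntegrable A B
  rw [intervalIntegral.integral_eq_sub_of_hasDerivAt h hcont]
  ring

lemma exp_neg_le_aux (x k : ℝ) (hx : 0 < x) (hk : 0 < k) :
    Real.exp (-x) ≤ (k / (Real.exp 1 * x)) ^ k := by
  have hb : 0 < k / (Real.exp 1 * x) := by positivity
  rw [Real.rpow_def_of_pos hb]
  apply Real.exp_le_exp.mpr
  have hxk : 0 < x/k := by positivity
  have h0 : Real.log (x/k) ≤ x/k - 1 := Real.log_le_sub_one_of_pos hxk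
  have h1 : Real.log (k / (Real.exp 1 * x)) = -(1 + Real.log (x/k)) := by
    rw [show k / (Real.exp 1 * x) = (Real.exp 1 * (x/k))⁻¹ by field_simp,
      Real.log_inv, Real.log_mul (Real.exp_ne_zero 1) (by positivity), Real.log_exp]
  rw [h1]
  have hkx : k * (x/k) = x := by field_simp
  nlinarith [mul_le_mul_of_nonneg_left h0 hk.le]

/-- Convolution-type integral bound (inequality (3.21)). -/
theorem convolution_integral_bound
    (p T r a : ℝ) (hp : 0 < p) (hT : 0 < T)
    (hr : r ∈ Set.Ioo (2:ℝ) 4) (ha : a ∈ Set.Ioo (r / 2) 2)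
    (n : ℕ) (hn : 0 < n)
    (t : ℝ) (ht : t ∈ Set.Icc (0:ℝ) T) :
    (∫ τ in (0:ℝ)..t,
        (t - τ) ^ ((1:ℝ) / r) * Real.exp (-(p * (n : ℝ) ^ 2 * π ^ 2 * (t - τ))))
      ≤ (n : ℝ) ^ (-(a / r)) / (p * (n : ℝ) ^ 2 * π ^ 2) *
          (1 + T ^ ((1:ℝ) / r) *
            (1 / (p * π ^ 2 * Real.exp 1 * (2 - a))) ^ ((1:ℝ) / (2 - a))) := by
  obtain ⟨hr2, hr4⟩ := hr
  obtain ⟨ha1, ha2⟩ := ha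
  obtain ⟨ht0, htT⟩ := ht
  have hπ : 0 < π := Real.pi_pos
  have hn1 : (1:ℝ) ≤ (n:ℝ) := by exact_mod_cast hn
  have hnpos : (0:ℝ) < (n:ℝ) := by positivity
  have hr0 : (0:ℝ) < r := by linarith
  have ha0 : 0 < a := by linarith
  have h2a : 0 < 2 - a := by linarith
  set lam := p * (n:ℝ)^2 * π^2 with hlamdef
  have hlam : 0 < lam := by positivity
  set b := (n:ℝ) ^ (-a) with hbdef
  have hb : 0 < b := Real.rpow_pos_of_pos hnpos _
  set C := (1 / (p * π^2 * Real.exp 1 * (2-a))) ^ ((1:ℝ)/(2-a)) with hCdef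
  have hC : 0 ≤ C := Real.rpow_nonneg (by positivity) _
  set N := (n:ℝ) ^ (-(a/r)) with hNdef
  have hN : 0 ≤ N := Real.rpow_nonneg hnpos.le _
  set Tr := T ^ ((1:ℝ)/r) with hTrdef
  have hTr : 0 ≤ Tr := Real.rpow_nonneg hT.le _
  -- continuity
  have hfc : Continuous (fun s : ℝ => s ^ ((1:ℝ)/r) * Real.exp (-(lam * s))) := by
    apply Continuous.mul
    · exact continuous_iff_continuousAt.mpr fun x =>
        Real.continuousAt_rpow_const x _ (Or.inr (by positivity))
    · exact Real.continuous_exp.comp (continuous_const.mul continuous_id).neg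
  have hec : Continuous fun s : ℝ => Real.exp (-(lam * s)) :=
    Real.continuous_exp.comp (continuous_const.mul continuous_id).neg
  -- substitution
  have hsub : (∫ τ in (0:ℝ)..t, (t - τ) ^ ((1:ℝ)/r) * Real.exp (-(lam * (t - τ))))
      = ∫ s in (0:ℝ)..t, s ^ ((1:ℝ)/r) * Real.exp (-(lam * s)) := by
    have h := intervalIntegral.integral_comp_sub_left (a := (0:ℝ)) (b := t)
      (fun s => s ^ ((1:ℝ)/r) * Real.exp (-(lam * s))) t
    simpa using h
  -- rpow facts
  have hbr : b ^ ((1:ℝ)/r) = N := by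
    rw [hbdef, hNdef, ← Real.rpow_mul hnpos.le]
    congr 1
    ring
  have hn2 : ((n:ℝ)^2 : ℝ) = (n:ℝ) ^ ((2:ℝ)) := by
    rw [← Real.rpow_natCast (n:ℝ) 2]; norm_num
  have hnsplit : (n:ℝ)^((2:ℝ)) * (n:ℝ)^(-a) = (n:ℝ)^(2-a) := by
    rw [← Real.rpow_add hnpos, sub_eq_add_neg]
  have hlamb : lam * b = p * π^2 * (n:ℝ) ^ (2 - a) := by
    rw [hlamdef, hbdef, hn2, ← hnsplit]; ring
  have hx : 0 < p * π^2 * (n:ℝ)^(2-a) := by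
    have := Real.rpow_pos_of_pos hnpos (2-a); positivity
  -- key exponential bound
  have hexpb : Real.exp (-(lam * b)) ≤ C * N := by
    rw [hlamb]
    have hk : 0 < (1:ℝ)/(2-a) := by positivity
    refine (exp_neg_le_aux (p * π^2 * (n:ℝ)^(2-a)) ((1:ℝ)/(2-a)) hx hk).trans ?_
    have hnp : 0 < (n:ℝ)^(2-a) := Real.rpow_pos_of_pos hnpos _
    have hbase : (1:ℝ)/(2-a) / (Real.exp 1 * (p * π^2 * (n:ℝ)^(2-a)))
        = (1 / (p * π^2 * Real.exp 1 * (2-a))) * ((n:ℝ)^(2-a))⁻¹ := by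
      field_simp
    rw [hbase, Real.mul_rpow (by positivity) (by positivity), hCdef]
    apply mul_le_mul_of_nonneg_left ?_ hC
    have hinv : ((n:ℝ)^(2-a))⁻¹ = (n:ℝ)^(-(2-a)) := (Real.rpow_neg hnpos.le _).symm
    rw [hinv, ← Real.rpow_mul hnpos.le]
    have hone : -(2-a) * ((1:ℝ)/(2-a)) = -1 := by field_simp
    rw [hone, hNdef]
    apply Real.rpow_le_rpow_of_exponent_le hn1
    have har : a / r ≤ 1 := by
      rw [div_le_one hr0]; linarith
    linarith
  -- generic bound on pieces
  have key : ∀ A B q : ℝ, A ≤ B → (∀ s ∈ Set.Icc A B, s ^ ((1:ℝ)/r) ≤ q) →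
      (∫ s in A..B, s ^ ((1:ℝ)/r) * Real.exp (-(lam * s)))
        ≤ q * ((Real.exp (-(lam*A)) - Real.exp (-(lam*B))) / lam) := by
    intro A B q hAB hq
    have h1 : (∫ s in A..B, s ^ ((1:ℝ)/r) * Real.exp (-(lam * s)))
        ≤ ∫ s in A..B, q * Real.exp (-(lam * s)) := by
      apply intervalIntegral.integral_mono_on hAB (hfc.intervalIntegrable _ _)
        ((continuous_const.mul hec).intervalIntegrable _ _)
      intro s hs
      exact mul_le_mul_of_nonneg_right (hq s hs) (Real.exp_nonneg _)
    rwa [intervalIntegral.integral_const_mul, integral_exp_neg_mul lam A B hlam.ne'] at h1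
  rw [hsub]
  rcases le_or_gt t b with hcase | hcase
  · -- t ≤ b
    have hq : ∀ s ∈ Set.Icc (0:ℝ) t, s ^ ((1:ℝ)/r) ≤ b ^ ((1:ℝ)/r) := by
      intro s hs
      exact Real.rpow_le_rpow hs.1 (hs.2.trans hcase) (by positivity)
    have h1 := key 0 t _ ht0 hq
    rw [hbr] at h1
    refine h1.trans ?_
    have hE : 0 ≤ Real.exp (-(lam*t)) := Real.exp_nonneg _
    have hE1 : Real.exp (-(lam*0)) = 1 := by norm_num
    rw [hE1]
    have hX : 0 ≤ Tr * C := mul_nonneg hTr hC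
    calc N * ((1 - Real.exp (-(lam*t))) / lam)
        ≤ N * ((1 + Tr * C) / lam) := by
          apply mul_le_mul_of_nonneg_left ?_ hN
          apply div_le_div_of_nonneg_right ?_ hlam.le
          linarith
      _ = N / lam * (1 + Tr * C) := by ring
  · -- b < t
    have hi1 : IntervalIntegrable (fun s : ℝ => s ^ ((1:ℝ)/r) * Real.exp (-(lam * s))) volume 0 b :=
      hfc.intervalIntegrable _ _
    have hi2 : IntervalIntegrable (fun s : ℝ => s ^ ((1:ℝ)/r) * Real.exp (-(lam * s))) volume b t :=
      hfc.intervalIntegrable _ _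
    have hsplit : (∫ s in (0:ℝ)..t, s ^ ((1:ℝ)/r) * Real.exp (-(lam * s)))
        = (∫ s in (0:ℝ)..b, s ^ ((1:ℝ)/r) * Real.exp (-(lam * s)))
          + ∫ s in b..t, s ^ ((1:ℝ)/r) * Real.exp (-(lam * s)) :=
      (intervalIntegral.integral_add_adjacent_intervals hi1 hi2).symm
    have hq1 : ∀ s ∈ Set.Icc (0:ℝ) b, s ^ ((1:ℝ)/r) ≤ b ^ ((1:ℝ)/r) := by
      intro s hs
      exact Real.rpow_le_rpow hs.1 hs.2 (by positivity)
    have hq2 : ∀ s ∈ Set.Icc b t, s ^ ((1:ℝ)/r) ≤ Tr := by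
      intro s hs
      exact Real.rpow_le_rpow (hb.le.trans hs.1) (hs.2.trans htT) (by positivity)
    have h1 := key 0 b _ hb.le hq1
    have h2 := key b t _ hcase.le hq2
    rw [hbr] at h1
    rw [hsplit]
    have hE1 : Real.exp (-(lam*0)) = 1 := by norm_num
    rw [hE1] at h1
    set E1 := Real.exp (-(lam*b)) with hE1def
    set E2 := Real.exp (-(lam*t)) with hE2def
    have hE1n : 0 ≤ E1 := Real.exp_nonneg _
    have hE2n : 0 ≤ E2 := Real.exp_nonneg _
    calc (∫ s in (0:ℝ)..b, s ^ ((1:ℝ)/r) * Real.exp (-(lam * s)))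
          + (∫ s in b..t, s ^ ((1:ℝ)/r) * Real.exp (-(lam * s)))
        ≤ N * ((1 - E1) / lam) + Tr * ((E1 - E2) / lam) := add_le_add h1 h2
      _ = (N * (1 - E1) + Tr * (E1 - E2)) / lam := by ring
      _ ≤ (N * (1 + Tr * C)) / lam := by
          apply div_le_div_of_nonneg_right ?_ hlam.le
          nlinarith [mul_le_mul_of_nonneg_left hexpb hTr, mul_nonneg hN hE1n, mul_nonneg hTr hE2n]
      _ = N / lam * (1 + Tr * C) := by ring
end
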